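/- Let V be an m-dimensional real vector space and A = (A_1,…,A_q) a q-tuple of endomorphisms of V with generalized Newton transformations (T_u). Then tr(T_u) = (m − |u|)·σ_u(A) for every multi-index u ∈ ℕ^q. -/

import Mathlib

/-- The generalized elementary symmetric function `σ_u(A)` of a `q`-tuple
`A = (A_1, …, A_q)` of endomorphisms of the `m`-dimensional real vector space `ℝ^m`:
the coefficient of `t^u = t_1^{u_1}⋯t_q^{u_q}` in `det(t_1•A_1 + ⋯ + t_q•A_q + id)`. -/
noncomputable def msigma {m q : ℕ} (A : Fin q → Matrix (Fin m) (Fin m) ℝ)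
    (u : Fin q → ℕ) : ℝ :=
  MvPolynomial.coeff (Finsupp.equivFunOnFinite.symm u)
    (Matrix.det (1 + ∑ α, (MvPolynomial.X α : MvPolynomial (Fin q) ℝ) •
      (A α).map (MvPolynomial.C : ℝ → MvPolynomial (Fin q) ℝ)))

/-- Auxiliary (fuel-indexed) definition of the generalized Newton transformations. -/
noncomputable def gnewtonAux {m q : ℕ} (A : Fin q → Matrix (Fin m) (Fin m) ℝ) :
    ℕ → (Fin q → ℕ) → Matrix (Fin m) (Fin m) ℝ
  | 0, _ => 1
  | (n+1), u => msigma A u • (1 : Matrix (Fin m) (Fin m) ℝ) -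
      ∑ α, if u α = 0 then 0 else A α * gnewtonAux A n (Function.update u α (u α - 1))

/-- The generalized Newton transformations `T_u` of `A`, satisfying `T_0 = id` and
`T_u = σ_u(A)•id − Σ_α A_α ∘ T_{α_♭(u)}` (with `T_v = 0` when `v` has a negative entry,
encoded by the `if` guard). -/
noncomputable def gnewton {m q : ℕ} (A : Fin q → Matrix (Fin m) (Fin m) ℝ)
    (u : Fin q → ℕ) : Matrix (Fin m) (Fin m) ℝ :=
  gnewtonAux A (∑ α, u α) u


section GNewtonProof

open MvPolynomial Matrix


open MvPolynomial Matrix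

variable {R : Type*} [CommRing R] {σ' : Type*}

lemma pderiv_finset_prod {ι : Type*} [DecidableEq ι] (d : σ') (s : Finset ι) (f : ι → MvPolynomial σ' R) :
    pderiv d (∏ i ∈ s, f i) = ∑ i ∈ s, pderiv d (f i) * ∏ j ∈ s.erase i, f j := by
  classical
  induction s using Finset.induction_on with
  | empty => simp [pderiv_one]
  | @insert k s hks ih =>
    rw [Finset.prod_insert hks, pderiv_mul, ih, Finset.sum_insert hks,
      Finset.erase_insert hks]
    rw [Finset.mul_sum]
    congr 1
    apply Finset.sum_congr rfl
    intro i hi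
    rw [Finset.erase_insert_of_ne (by rintro rfl; exact hks hi)]
    rw [Finset.prod_insert (by simp [hks])]
    ring

lemma det_updateRow_finset_sum {n : Type*} [Fintype n] [DecidableEq n] {ι : Type*}
    (M : Matrix n n R) (j : n) (s : Finset ι) (v : ι → n → R) :
    (M.updateRow j (∑ k ∈ s, v k)).det = ∑ k ∈ s, (M.updateRow j (v k)).det := by
  classical
  induction s using Finset.induction_on with
  | empty =>
    simp only [Finset.sum_empty]
    simpa using Matrix.det_updateRow_smul M j 0 0
  | @insert k s hks ih =>
    rw [Finset.sum_insert hks, Finset.sum_insert hks, Matrix.det_updateRow_add, ih]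

lemma trace_adjugate_mul {n : Type*} [Fintype n] [DecidableEq n]
    (M N : Matrix n n R) :
    (M.adjugate * N).trace = ∑ i, (M.updateRow i (N i)).det := by
  have hrow : ∀ i : n, N i = ∑ k, N i k • (Pi.single k 1 : n → R) := by
    intro i
    ext j
    simp [Pi.single_apply, Finset.sum_ite_eq' Finset.univ j]
  calc (M.adjugate * N).trace = ∑ i, ∑ k, M.adjugate i k * N k i := by
        simp [Matrix.trace, Matrix.diag, Matrix.mul_apply]
    _ = ∑ k, ∑ i, N k i * (M.updateRow k (Pi.single i 1)).det := by
        rw [Finset.sum_comm]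
        simp [Matrix.adjugate_apply, mul_comm]
    _ = ∑ k, (M.updateRow k (N k)).det := by
        apply Finset.sum_congr rfl
        intro k _
        have h2 : (M.updateRow k (N k)).det
            = ∑ i, (M.updateRow k (N k i • (Pi.single i 1 : n → R))).det := by
          rw [← det_updateRow_finset_sum]
          congr 1
          exact congrArg _ (hrow k)
        rw [h2]
        simp [Matrix.det_updateRow_smul]

lemma pderiv_det {n : Type*} [Fintype n] [DecidableEq n] (d : σ')
    (M : Matrix n n (MvPolynomial σ' R)) :
    pderiv d M.det = ∑ i, (M.updateRow i (fun j => pderiv d (M i j))).det := by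
  classical
  rw [Matrix.det_apply, map_sum]
  have : ∀ i : n, (M.updateRow i (fun j => pderiv d (M i j))).det
      = ∑ σ : Equiv.Perm n, Equiv.Perm.sign σ •
        ∏ j, (M.updateRow i (fun j => pderiv d (M i j))) (σ j) j := fun i => Matrix.det_apply _
  simp_rw [this]
  rw [Finset.sum_comm]
  apply Finset.sum_congr rfl
  intro σ _
  have hmap : (pderiv d) (Equiv.Perm.sign σ • ∏ i, M (σ i) i)
      = Equiv.Perm.sign σ • (pderiv d) (∏ i, M (σ i) i) := by
    rcases Int.units_eq_one_or (Equiv.Perm.sign σ) with h | h <;> simp [h, Units.smul_def]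
  rw [hmap, pderiv_finset_prod, ← Finset.smul_sum]
  congr 1
  rw [← Equiv.sum_comp σ (fun k => ∏ j, (M.updateRow k (fun j => pderiv d (M k j))) (σ j) j)]
  apply Finset.sum_congr rfl
  intro i _
  have h1 : ∀ j : n, (M.updateRow (σ i) (fun j' => pderiv d (M (σ i) j'))) (σ j) j
      = if j = i then pderiv d (M (σ i) j) else M (σ j) j := by
    intro j
    rw [Matrix.updateRow_apply]
    simp [σ.injective.eq_iff]
  have h2 : (∏ j, (if j = i then pderiv d (M (σ i) j) else M (σ j) j))
      = pderiv d (M (σ i) i) * ∏ j ∈ Finset.univ.erase i, M (σ j) j := by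
    rw [← Finset.mul_prod_erase Finset.univ _ (Finset.mem_univ i)]
    simp only [if_pos rfl]
    congr 1
    exact Finset.prod_congr rfl fun j hj => if_neg (Finset.ne_of_mem_erase hj)
  rw [Finset.prod_congr rfl (fun j _ => h1 j), h2]

lemma coeff_X_mul_pderiv (d : σ') (u : σ' →₀ ℕ) (p : MvPolynomial σ' R) :
    coeff u (X d * pderiv d p) = (u d : R) * coeff u p := by
  classical
  induction p using MvPolynomial.induction_on' with
  | monomial v c =>
    rw [pderiv_monomial]
    rw [X, monomial_mul, one_mul, coeff_monomial, coeff_monomial]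
    by_cases hv : v d = 0
    · have h0 : (if ((Finsupp.single d 1) + (v - Finsupp.single d 1)) = u
          then c * ((v d : ℕ) : R) else 0) = 0 := by
        split_ifs <;> simp [hv]
      rw [h0]
      by_cases hvu : v = u
      · subst hvu; simp [hv]
      · simp [hvu]
    · have hle : Finsupp.single d 1 ≤ v := by
        rw [Finsupp.single_le_iff]; omega
      have hv' : Finsupp.single d 1 + (v - Finsupp.single d 1) = v := by
        rw [add_comm]; exact tsub_add_cancel_of_le hle
      rw [hv']
      split_ifs with h
      · subst h; ring
      · ring
  | add p q hp hq => rw [map_add, mul_add, coeff_add, coeff_add, hp, hq, mul_add]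

section
variable {m q : ℕ} (A : Fin q → Matrix (Fin m) (Fin m) ℝ)

noncomputable def Bmat : Matrix (Fin m) (Fin m) (MvPolynomial (Fin q) ℝ) :=
  1 + ∑ α, (MvPolynomial.X α : MvPolynomial (Fin q) ℝ) •
      (A α).map (MvPolynomial.C : ℝ → MvPolynomial (Fin q) ℝ)

noncomputable def Dmat (u : Fin q → ℕ) : Matrix (Fin m) (Fin m) ℝ :=
  ((Bmat A).adjugate).map (MvPolynomial.coeff (Finsupp.equivFunOnFinite.symm u))

lemma finsupp_update (u : Fin q → ℕ) (α : Fin q) :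
    Finsupp.equivFunOnFinite.symm u - Finsupp.single α 1
      = Finsupp.equivFunOnFinite.symm (Function.update u α (u α - 1)) := by
  ext β
  rw [Finsupp.tsub_apply]
  simp only [Finsupp.equivFunOnFinite_symm_apply_apply, Finsupp.single_apply,
    Function.update_apply]
  by_cases h : β = α
  · subst h; simp
  · simp [h, Ne.symm h]

lemma Bmat_split :
    Bmat A * (Bmat A).adjugate = (Bmat A).adjugate
      + ∑ α, (MvPolynomial.X α : MvPolynomial (Fin q) ℝ) •
          ((A α).map MvPolynomial.C * (Bmat A).adjugate) := by
  nth_rewrite 1 [Bmat]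
  rw [add_mul, one_mul, Finset.sum_mul]
  congr 1
  exact Finset.sum_congr rfl fun α _ => smul_mul_assoc _ _ _

lemma Dmat_rec (u : Fin q → ℕ) :
    Dmat A u + ∑ α, (if u α = 0 then 0
        else A α * Dmat A (Function.update u α (u α - 1)))
      = msigma A u • (1 : Matrix (Fin m) (Fin m) ℝ) := by
  classical
  set v := Finsupp.equivFunOnFinite.symm u with hv
  ext i j
  have h := congrArg (fun M : Matrix (Fin m) (Fin m) (MvPolynomial (Fin q) ℝ) =>
    MvPolynomial.coeff v (M i j)) (Matrix.mul_adjugate (Bmat A))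
  rw [Bmat_split] at h
  simp only [Matrix.add_apply, Matrix.sum_apply, Matrix.smul_apply, smul_eq_mul,
    coeff_add, coeff_sum] at h
  -- compute each summand on the LHS of h
  have hterm : ∀ α : Fin q,
      MvPolynomial.coeff v (MvPolynomial.X α * (((A α).map MvPolynomial.C * (Bmat A).adjugate :
        Matrix (Fin m) (Fin m) (MvPolynomial (Fin q) ℝ))) i j)
      = (if u α = 0 then 0
          else A α * Dmat A (Function.update u α (u α - 1))) i j := by
    intro α
    rw [MvPolynomial.coeff_X_mul']
    by_cases h0 : u α = 0
    · rw [if_neg (by simp [hv, Finsupp.mem_support_iff, h0]), if_pos h0]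
      simp
    · rw [if_pos (by simp [hv, Finsupp.mem_support_iff, h0]), if_neg h0]
      rw [hv, finsupp_update]
      simp only [Matrix.mul_apply, Matrix.map_apply, coeff_sum, coeff_C_mul, Dmat]
  -- compute the RHS of h
  have hR : MvPolynomial.coeff v (Matrix.det (Bmat A) * (1 : Matrix (Fin m) (Fin m)
        (MvPolynomial (Fin q) ℝ)) i j)
      = msigma A u * (if i = j then (1:ℝ) else 0) := by
    rw [Matrix.one_apply]
    split_ifs with hij
    · rw [mul_one, mul_one]; rfl
    · rw [mul_zero, mul_zero, coeff_zero]
  simp only [hterm] at h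
  rw [hR] at h
  simp only [Matrix.add_apply, Matrix.sum_apply, Matrix.smul_apply, smul_eq_mul,
    Matrix.one_apply]
  rw [← h]
  rfl


lemma Bmat_constantCoeff : (Bmat A).map MvPolynomial.constantCoeff = 1 := by
  ext i j
  simp [Bmat, Matrix.add_apply, Matrix.sum_apply, Matrix.smul_apply, smul_eq_mul,
    Matrix.map_apply, Matrix.one_apply, apply_ite]

lemma Dmat_zero (u : Fin q → ℕ) (hu : ∀ α, u α = 0) : Dmat A u = 1 := by
  have hv : Finsupp.equivFunOnFinite.symm u = 0 := by
    ext α; simp [hu α]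
  have h1 : Dmat A u = ((Bmat A).adjugate).map MvPolynomial.constantCoeff := by
    rw [Dmat, hv, MvPolynomial.constantCoeff_eq]
  rw [h1]
  have h2 := (MvPolynomial.constantCoeff : MvPolynomial (Fin q) ℝ →+* ℝ).map_adjugate (Bmat A)
  simp only [RingHom.mapMatrix_apply] at h2
  rw [h2, Bmat_constantCoeff, Matrix.adjugate_one]

lemma gnewtonAux_eq : ∀ (n : ℕ) (u : Fin q → ℕ), (∑ α, u α) = n →
    gnewtonAux A n u = Dmat A u
  | 0, u, h => by
    have hu : ∀ α, u α = 0 := fun α =>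
      Finset.sum_eq_zero_iff.mp h α (Finset.mem_univ α)
    rw [gnewtonAux, Dmat_zero A u hu]
  | (n+1), u, h => by
    rw [gnewtonAux]
    have hS : (∑ α, if u α = 0 then 0
          else A α * gnewtonAux A n (Function.update u α (u α - 1)))
        = ∑ α, (if u α = 0 then 0
          else A α * Dmat A (Function.update u α (u α - 1))) := by
      apply Finset.sum_congr rfl
      intro α _
      by_cases h0 : u α = 0
      · rw [if_pos h0, if_pos h0]
      · rw [if_neg h0, if_neg h0]
        congr 1
        apply gnewtonAux_eq
        have h2 : u α + ∑ β ∈ Finset.univ.erase α, u β = n + 1 := by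
          rw [Finset.add_sum_erase _ _ (Finset.mem_univ α)]; exact h
        rw [Finset.sum_update_of_mem (Finset.mem_univ α)]
        simp only [Finset.sdiff_singleton_eq_erase]
        omega
    rw [hS, ← Dmat_rec A u]
    exact add_sub_cancel_right _ _

lemma trace_adjB :
    ((Bmat A).adjugate).trace
      = (m : MvPolynomial (Fin q) ℝ) * (Bmat A).det
        - ∑ α, (MvPolynomial.X α : MvPolynomial (Fin q) ℝ) *
            MvPolynomial.pderiv α ((Bmat A).det) := by
  classical
  have hJ : ∀ α : Fin q, MvPolynomial.pderiv α ((Bmat A).det)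
      = (((A α).map MvPolynomial.C : Matrix (Fin m) (Fin m) (MvPolynomial (Fin q) ℝ))
          * (Bmat A).adjugate).trace := by
    intro α
    rw [pderiv_det, Matrix.trace_mul_comm, trace_adjugate_mul]
    apply Finset.sum_congr rfl
    intro i _
    have hrow : (fun j => (MvPolynomial.pderiv α) (Bmat A i j))
        = ((A α).map MvPolynomial.C) i := by
      funext j
      simp [Bmat, Matrix.add_apply, Matrix.sum_apply, Matrix.smul_apply, smul_eq_mul,
        Matrix.map_apply, Matrix.one_apply, pderiv_mul, Pi.single_apply,
        apply_ite (⇑(MvPolynomial.pderiv α)), Finset.sum_ite_eq, Finset.sum_ite_eq']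
    rw [hrow]
  have htr1 : (Bmat A * (Bmat A).adjugate).trace
      = (m : MvPolynomial (Fin q) ℝ) * (Bmat A).det := by
    rw [Matrix.mul_adjugate, Matrix.trace_smul, Matrix.trace_one]
    rw [smul_eq_mul, Fintype.card_fin, mul_comm]
  have htr2 : (Bmat A * (Bmat A).adjugate).trace
      = ((Bmat A).adjugate).trace + ∑ α, (MvPolynomial.X α : MvPolynomial (Fin q) ℝ) *
          MvPolynomial.pderiv α ((Bmat A).det) := by
    rw [Bmat_split, Matrix.trace_add]
    congr 1
    rw [Matrix.trace_sum]
    apply Finset.sum_congr rfl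
    intro α _
    rw [Matrix.trace_smul, smul_eq_mul, hJ α]
  linear_combination htr1 - htr2

end

/-- `tr(T_u) = (m − |u|)·σ_u(A)` for every multi-index `u`. -/
theorem trace_gnewton {m q : ℕ} (A : Fin q → Matrix (Fin m) (Fin m) ℝ)
    (u : Fin q → ℕ) :
    (gnewton A u).trace = ((m : ℝ) - (∑ α, u α : ℕ)) * msigma A u := by
  classical
  rw [gnewton, gnewtonAux_eq A _ u rfl]
  have h2 : (Dmat A u).trace
      = MvPolynomial.coeff (Finsupp.equivFunOnFinite.symm u) (((Bmat A).adjugate).trace) := by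
    simp [Dmat, Matrix.trace, Matrix.diag, Matrix.map_apply, MvPolynomial.coeff_sum]
  rw [h2, trace_adjB]
  rw [MvPolynomial.coeff_sub, MvPolynomial.coeff_sum]
  have hm : ((m : ℕ) : MvPolynomial (Fin q) ℝ) = MvPolynomial.C ((m : ℕ) : ℝ) := by
    rw [map_natCast]
  rw [hm, MvPolynomial.coeff_C_mul]
  have hsig : MvPolynomial.coeff (Finsupp.equivFunOnFinite.symm u) ((Bmat A).det)
      = msigma A u := rfl
  rw [hsig]
  have hterm : ∀ α : Fin q, MvPolynomial.coeff (Finsupp.equivFunOnFinite.symm u)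
      ((MvPolynomial.X α : MvPolynomial (Fin q) ℝ) * MvPolynomial.pderiv α ((Bmat A).det))
      = (u α : ℝ) * msigma A u := fun α => coeff_X_mul_pderiv α _ _
  rw [Finset.sum_congr rfl fun α _ => hterm α, ← Finset.sum_mul]
  rw [← Nat.cast_sum]
  ring

end GNewtonProof
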